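/- Assume the controlled flow hypothesis. Define the space and velocity barycenters x̄(t) = ∫ x dμ(t)(x, v) and v̄(t) = ∫ v dμ(t)(x, v). Then for every t ≥ 0, x̄ and v̄ are differentiable with x̄'(t) = v̄(t) and v̄'(t) = ∫_{ω(t)} u(t, x, v) dμ(t)(x, v). -/

import Mathlib

open MeasureTheory Metric Set

/-- The (topological) support of a measure. -/
def msupp {α : Type*} [TopologicalSpace α] [MeasurableSpace α]
    (μ : Measure α) : Set α :=
  {x | ∀ U : Set α, IsOpen U → x ∈ U → 0 < μ U}

/-- The Cucker–Smale interaction kernel. -/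
noncomputable def xi {d : ℕ} (φ : ℝ → ℝ)
    (μ : Measure (EuclideanSpace ℝ (Fin d) × EuclideanSpace ℝ (Fin d)))
    (x v : EuclideanSpace ℝ (Fin d)) : EuclideanSpace ℝ (Fin d) :=
  ∫ p, φ (‖x - p.1‖) • (p.2 - v) ∂μ

/-!
Each trajectory `t ↦ Φ t z` has a derivative that is jointly continuous in `(t, z)`, so on the
compact support of `μ0` it is the integral of that derivative, and Fubini lets one differentiate
the barycenters under the integral sign. The alignment force then integrates to zero because
`φ ‖x - y‖ • (w - v)` changes sign when the two particles are exchanged, so only the control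
contributes to `v̄'`.
-/

open Function

lemma msupp_eq_support {X : Type*} [TopologicalSpace X] [MeasurableSpace X] (μ : Measure X) :
    msupp μ = μ.support := by
  ext x
  simp only [msupp, Measure.support_eq_forall_isOpen, mem_ofPred_eq]
  exact ⟨fun h U hx hU => h U hU hx, fun h U hU hx => h U hx hU⟩

lemma ae_mem_msupp {X : Type*} [TopologicalSpace X] [HereditarilyLindelofSpace X]
    [MeasurableSpace X] (μ : Measure X) : ∀ᵐ x ∂μ, x ∈ msupp μ :=
  msupp_eq_support μ ▸ Measure.support_mem_ae

section HasDerivWithinAt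

variable {E F : Type*} [NormedAddCommGroup E] [NormedSpace ℝ E] [NormedAddCommGroup F]
  [NormedSpace ℝ F] {f : ℝ → E × F} {f' : E × F} {s : Set ℝ} {t : ℝ}

lemma HasDerivWithinAt.fst (h : HasDerivWithinAt f f' s t) :
    HasDerivWithinAt (fun r => (f r).1) f'.1 s t :=
  (ContinuousLinearMap.fst ℝ E F).hasFDerivAt.comp_hasDerivWithinAt t h

lemma HasDerivWithinAt.snd (h : HasDerivWithinAt f f' s t) :
    HasDerivWithinAt (fun r => (f r).2) f'.2 s t :=
  (ContinuousLinearMap.snd ℝ E F).hasFDerivAt.comp_hasDerivWithinAt t h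

end HasDerivWithinAt

section Ici

variable {E : Type*} [NormedAddCommGroup E] [NormedSpace ℝ E] [CompleteSpace E] {f g : ℝ → E}

lemma eq_add_intervalIntegral_of_hasDerivWithinAt_Ici (hg : Continuous g)
    (hfg : ∀ t, 0 ≤ t → HasDerivWithinAt f (g t) (Ici 0) t) {t : ℝ} (ht : 0 ≤ t) :
    f t = f 0 + ∫ s in 0..t, g s := by
  have hf : ContinuousOn f (Icc 0 t) := fun s hs =>
    (hfg s hs.1).continuousWithinAt.mono Icc_subset_Ici_self
  rw [intervalIntegral.integral_eq_sub_of_hasDeriv_right_of_le ht hf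
    (fun s hs => (hfg s hs.1.le).mono fun r hr => hs.1.le.trans (le_of_lt hr))
    (hg.intervalIntegrable 0 t), add_sub_cancel]

lemma hasDerivWithinAt_Ici_of_eq_add_intervalIntegral (hg : Continuous g)
    (hf : ∀ t, 0 ≤ t → f t = f 0 + ∫ s in 0..t, g s) {t : ℝ} (ht : 0 ≤ t) :
    HasDerivWithinAt f (g t) (Ici 0) t := by
  have hprim : HasDerivAt (fun r => f 0 + ∫ s in 0..r, g s) (g t) t :=
    (intervalIntegral.integral_hasDerivAt_right (hg.intervalIntegrable 0 t)
      (hg.stronglyMeasurableAtFilter _ _) hg.continuousAt).const_add (f 0)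
  exact hprim.hasDerivWithinAt.congr (fun r hr => hf r hr) (hf t ht)

end Ici

lemma ae_mem_prod {Z W : Type*} [MeasurableSpace Z] [MeasurableSpace W] {μ : Measure Z}
    {ν : Measure W} [SFinite ν] {K : Set Z} {L : Set W} (hμK : ∀ᵐ z ∂μ, z ∈ K)
    (hνL : ∀ᵐ w ∂ν, w ∈ L) : ∀ᵐ q ∂μ.prod ν, q ∈ K ×ˢ L :=
  (Measure.quasiMeasurePreserving_fst.ae hμK).and (Measure.quasiMeasurePreserving_snd.ae hνL)

section CompactlyConcentrated

variable {Z E : Type*} [TopologicalSpace Z] [MeasurableSpace Z] [OpensMeasurableSpace Z]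
  [NormedAddCommGroup E] {μ : Measure Z} {K : Set Z}

lemma Continuous.integrable_of_ae_mem_isCompact [SecondCountableTopologyEither Z E]
    [IsFiniteMeasure μ] {f : Z → E} (hf : Continuous f) (hK : IsCompact K)
    (hμK : ∀ᵐ z ∂μ, z ∈ K) : Integrable f μ := by
  obtain ⟨C, hC⟩ := hK.exists_bound_of_continuousOn hf.continuousOn
  exact (integrable_const C).mono' hf.aestronglyMeasurable (hμK.mono hC)

lemma continuous_integral_of_ae_mem_isCompact {P : Type*} [TopologicalSpace P]
    [FirstCountableTopology P] [LocallyCompactSpace P] [NormedSpace ℝ E]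
    [SecondCountableTopologyEither Z E] [IsLocallyFiniteMeasure μ] (hK : IsCompact K)
    (hμK : ∀ᵐ z ∂μ, z ∈ K) {F : P → Z → E} (hF : Continuous (uncurry F)) :
    Continuous fun p => ∫ z, F p z ∂μ := by
  simpa only [Measure.restrict_eq_self_of_ae_mem hμK] using
    continuous_parametric_integral_of_continuous (μ := μ) hF hK

end CompactlyConcentrated

lemma integral_integral_eq_zero_of_antisymm {Z E : Type*} [MeasurableSpace Z]
    [NormedAddCommGroup E] [NormedSpace ℝ E] {μ : Measure Z} [SFinite μ] {F : Z → Z → E}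
    (hF : Integrable (uncurry F) (μ.prod μ)) (hanti : ∀ z w, F w z = -F z w) :
    ∫ z, ∫ w, F z w ∂μ ∂μ = 0 := by
  have : IsAddTorsionFree E := .of_isTorsionFree ℝ E
  refine self_eq_neg.mp ?_
  calc ∫ z, ∫ w, F z w ∂μ ∂μ = ∫ w, ∫ z, F z w ∂μ ∂μ := integral_integral_swap hF
    _ = ∫ w, ∫ z, -F w z ∂μ ∂μ := by simp only [← hanti]
    _ = -∫ z, ∫ w, F z w ∂μ ∂μ := by simp only [integral_neg]

lemma hasDerivWithinAt_Ici_integral {Z E : Type*} [TopologicalSpace Z]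
    [SecondCountableTopology Z] [MeasurableSpace Z] [OpensMeasurableSpace Z]
    [NormedAddCommGroup E] [NormedSpace ℝ E] [CompleteSpace E] {μ : Measure Z}
    [IsFiniteMeasure μ] {K : Set Z} (hK : IsCompact K)
    (hμK : ∀ᵐ z ∂μ, z ∈ K) {f g : ℝ → Z → E} (hf₀ : Integrable (f 0) μ)
    (hg : Continuous (uncurry g))
    (hfg : ∀ z ∈ K, ∀ t, 0 ≤ t → HasDerivWithinAt (f · z) (g t z) (Ici 0) t)
    {t : ℝ} (ht : 0 ≤ t) :
    HasDerivWithinAt (fun t => ∫ z, f t z ∂μ) (∫ z, g t z ∂μ) (Ici 0) t := by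
  refine hasDerivWithinAt_Ici_of_eq_add_intervalIntegral
    (continuous_integral_of_ae_mem_isCompact hK hμK hg) (fun r hr => ?_) ht
  have hprim : Continuous fun z => ∫ s in 0..r, g s z :=
    intervalIntegral.continuous_parametric_intervalIntegral_of_continuous'
      (f := fun z s => g s z) (hg.comp continuous_swap) 0 r
  have hg_prod : Integrable (uncurry g) ((volume.restrict (uIoc 0 r)).prod μ) := by
    have : IsFiniteMeasure (volume.restrict (uIoc 0 r)) :=
      isFiniteMeasure_restrict.2 measure_Ioc_lt_top.ne
    have hmem : ∀ᵐ s ∂volume.restrict (uIoc 0 r), s ∈ uIcc 0 r :=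
      (ae_restrict_mem measurableSet_uIoc).mono fun _ hs => uIoc_subset_uIcc hs
    exact hg.integrable_of_ae_mem_isCompact (isCompact_uIcc.prod hK) (ae_mem_prod hmem hμK)
  calc ∫ z, f r z ∂μ = ∫ z, (f 0 z + ∫ s in 0..r, g s z) ∂μ :=
        integral_congr_ae <| hμK.mono fun z hz =>
          eq_add_intervalIntegral_of_hasDerivWithinAt_Ici
            (hg.comp (continuous_id.prodMk continuous_const)) (hfg z hz) hr
    _ = ∫ z, f 0 z ∂μ + ∫ s in 0..r, ∫ z, g s z ∂μ := by
        rw [integral_add hf₀ (hprim.integrable_of_ae_mem_isCompact hK hμK),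
          intervalIntegral_integral_swap hg_prod]

section CuckerSmale

variable {d : ℕ} {φ : ℝ → ℝ} {X : Type*} [MeasurableSpace X]

lemma xi_map (hφ : Continuous φ) {μ : Measure X}
    {Ψ : X → EuclideanSpace ℝ (Fin d) × EuclideanSpace ℝ (Fin d)} (hΨ : AEMeasurable Ψ μ)
    (x v : EuclideanSpace ℝ (Fin d)) :
    xi φ (μ.map Ψ) x v = ∫ w, φ ‖x - (Ψ w).1‖ • ((Ψ w).2 - v) ∂μ :=
  integral_map hΨ (by fun_prop)

variable [TopologicalSpace X] [OpensMeasurableSpace X] {μ : Measure X} [IsFiniteMeasure μ]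
  {K : Set X}

lemma continuous_xi_map {P : Type*} [TopologicalSpace P] [FirstCountableTopology P]
    [LocallyCompactSpace P] (hφ : Continuous φ) (hK : IsCompact K) (hμK : ∀ᵐ z ∂μ, z ∈ K)
    {Ψ : P → X → EuclideanSpace ℝ (Fin d) × EuclideanSpace ℝ (Fin d)}
    (hΨ : Continuous (uncurry Ψ)) {x v : P → EuclideanSpace ℝ (Fin d)} (hx : Continuous x)
    (hv : Continuous v) : Continuous fun p => xi φ (μ.map (Ψ p)) (x p) (v p) := by
  have hΨp : ∀ p, Continuous (Ψ p) := fun p => hΨ.comp (Continuous.prodMk_right p)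
  simp_rw [xi_map hφ (hΨp _).aemeasurable]
  exact continuous_integral_of_ae_mem_isCompact hK hμK (by fun_prop)

lemma integral_xi_map_eq_zero [SecondCountableTopology X] (hφ : Continuous φ)
    (hK : IsCompact K) (hμK : ∀ᵐ z ∂μ, z ∈ K)
    {Ψ : X → EuclideanSpace ℝ (Fin d) × EuclideanSpace ℝ (Fin d)} (hΨ : Continuous Ψ) :
    ∫ z, xi φ (μ.map Ψ) (Ψ z).1 (Ψ z).2 ∂μ = 0 := by
  simp_rw [xi_map hφ hΨ.aemeasurable]
  refine integral_integral_eq_zero_of_antisymm ?_ fun z w => ?_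
  · exact Continuous.integrable_of_ae_mem_isCompact (by fun_prop) (hK.prod hK)
      (ae_mem_prod hμK hμK)
  · rw [norm_sub_rev, ← smul_neg, neg_sub]

lemma integral_xi_map_add_indicator [SecondCountableTopology X] [LocallyCompactSpace X]
    (hφ : Continuous φ) (hK : IsCompact K) (hμK : ∀ᵐ z ∂μ, z ∈ K)
    {Ψ : X → EuclideanSpace ℝ (Fin d) × EuclideanSpace ℝ (Fin d)} (hΨ : Continuous Ψ)
    {ω : Set (EuclideanSpace ℝ (Fin d) × EuclideanSpace ℝ (Fin d))} (hω : MeasurableSet ω)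
    {u : EuclideanSpace ℝ (Fin d) × EuclideanSpace ℝ (Fin d) → EuclideanSpace ℝ (Fin d)}
    (hu : Continuous (ω.indicator u)) :
    ∫ z, (xi φ (μ.map Ψ) (Ψ z).1 (Ψ z).2 + ω.indicator u (Ψ z)) ∂μ =
      ∫ p in ω, u p ∂(μ.map Ψ) := by
  have halign : Continuous fun z => xi φ (μ.map Ψ) (Ψ z).1 (Ψ z).2 :=
    continuous_xi_map (Ψ := fun _ => Ψ) hφ hK hμK (hΨ.comp continuous_snd) hΨ.fst hΨ.snd
  have hcontrol : Integrable (fun z => ω.indicator u (Ψ z)) μ :=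
    (hu.comp hΨ).integrable_of_ae_mem_isCompact hK hμK
  rw [integral_add (halign.integrable_of_ae_mem_isCompact hK hμK) hcontrol,
    integral_xi_map_eq_zero hφ hK hμK hΨ, zero_add, ← integral_indicator hω,
    integral_map hΨ.aemeasurable hu.aestronglyMeasurable]

end CuckerSmale

theorem stmt10_general {d : ℕ} (φ : ℝ → ℝ) (hφc : Continuous φ)
    (u : ℝ → (EuclideanSpace ℝ (Fin d) × EuclideanSpace ℝ (Fin d)) →
      EuclideanSpace ℝ (Fin d))
    (ω : ℝ → Set (EuclideanSpace ℝ (Fin d) × EuclideanSpace ℝ (Fin d)))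
    (hωm : ∀ t, MeasurableSet (ω t))
    (hχuc : Continuous fun q : ℝ × (EuclideanSpace ℝ (Fin d) × EuclideanSpace ℝ (Fin d)) =>
      Set.indicator (ω q.1) (u q.1) q.2)
    (μ0 : Measure (EuclideanSpace ℝ (Fin d) × EuclideanSpace ℝ (Fin d)))
    [IsProbabilityMeasure μ0] (hcs : IsCompact (msupp μ0))
    (Φ : ℝ → (EuclideanSpace ℝ (Fin d) × EuclideanSpace ℝ (Fin d)) →
      EuclideanSpace ℝ (Fin d) × EuclideanSpace ℝ (Fin d))
    (hΦcont : Continuous fun q : ℝ × (EuclideanSpace ℝ (Fin d) × EuclideanSpace ℝ (Fin d)) =>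
      Φ q.1 q.2)
    (hode : ∀ z ∈ msupp μ0, ∀ t : ℝ, 0 ≤ t →
      HasDerivWithinAt (fun s => Φ s z)
        ((Φ t z).2,
          xi φ (Measure.map (Φ t) μ0) (Φ t z).1 (Φ t z).2
            + Set.indicator (ω t) (u t) (Φ t z)) (Set.Ici 0) t)
    (xbar vbar : ℝ → EuclideanSpace ℝ (Fin d))
    (hxbar : ∀ t, xbar t = ∫ p, p.1 ∂(Measure.map (Φ t) μ0))
    (hvbar : ∀ t, vbar t = ∫ p, p.2 ∂(Measure.map (Φ t) μ0)) :
    ∀ t : ℝ, 0 ≤ t →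
      HasDerivWithinAt xbar (vbar t) (Set.Ici 0) t
      ∧ HasDerivWithinAt vbar (∫ p in ω t, u t p ∂(Measure.map (Φ t) μ0))
          (Set.Ici 0) t := by
  intro t ht
  have hK := ae_mem_msupp μ0
  have hΦt : ∀ s, Continuous (Φ s) := fun s => hΦcont.comp (Continuous.prodMk_right s)
  have hxbar' : xbar = fun s => ∫ z, (Φ s z).1 ∂μ0 := funext fun s => by
    rw [hxbar, integral_map (hΦt s).aemeasurable continuous_fst.aestronglyMeasurable]
  have hvbar' : vbar = fun s => ∫ z, (Φ s z).2 ∂μ0 := funext fun s => by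
    rw [hvbar, integral_map (hΦt s).aemeasurable continuous_snd.aestronglyMeasurable]
  have halign : Continuous fun q : ℝ × (EuclideanSpace ℝ (Fin d) × EuclideanSpace ℝ (Fin d)) =>
      xi φ (μ0.map (Φ q.1)) (Φ q.1 q.2).1 (Φ q.1 q.2).2 :=
    continuous_xi_map hφc hcs hK (Ψ := fun (q : ℝ × _) => Φ q.1)
      (hΦcont.comp (continuous_fst.fst.prodMk continuous_snd)) hΦcont.fst hΦcont.snd
  have hcontrol : Continuous fun q : ℝ × (EuclideanSpace ℝ (Fin d) × EuclideanSpace ℝ (Fin d)) =>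
      (ω q.1).indicator (u q.1) (Φ q.1 q.2) :=
    hχuc.comp (continuous_fst.prodMk hΦcont)
  refine ⟨?_, ?_⟩
  · rw [hxbar', hvbar']
    exact hasDerivWithinAt_Ici_integral (f := fun s z => (Φ s z).1) (g := fun s z => (Φ s z).2)
      hcs hK ((hΦt 0).fst.integrable_of_ae_mem_isCompact hcs hK) hΦcont.snd
      (fun z hz s hs => (hode z hz s hs).fst) ht
  · rw [hvbar', ← integral_xi_map_add_indicator hφc hcs hK (hΦt t) (hωm t)
      (hχuc.comp (Continuous.prodMk_right t))]
    exact hasDerivWithinAt_Ici_integral (f := fun s z => (Φ s z).2)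
      (g := fun s z => xi φ (μ0.map (Φ s)) (Φ s z).1 (Φ s z).2 + (ω s).indicator (u s) (Φ s z))
      hcs hK ((hΦt 0).snd.integrable_of_ae_mem_isCompact hcs hK) (halign.add hcontrol)
      (fun z hz s hs => (hode z hz s hs).snd) ht

theorem stmt10 {d : ℕ} (hd : 0 < d) (φ : ℝ → ℝ) (hφc : Continuous φ)
    (hφa : Antitone φ) (hφp : ∀ r : ℝ, 0 < φ r)
    (u : ℝ → (EuclideanSpace ℝ (Fin d) × EuclideanSpace ℝ (Fin d)) →
      EuclideanSpace ℝ (Fin d))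
    (hub : ∃ C : ℝ, ∀ t p, ‖u t p‖ ≤ C)
    (huc : Continuous fun q : ℝ × (EuclideanSpace ℝ (Fin d) × EuclideanSpace ℝ (Fin d)) =>
      u q.1 q.2)
    (ω : ℝ → Set (EuclideanSpace ℝ (Fin d) × EuclideanSpace ℝ (Fin d)))
    (hωm : ∀ t, MeasurableSet (ω t))
    (hχuc : Continuous fun q : ℝ × (EuclideanSpace ℝ (Fin d) × EuclideanSpace ℝ (Fin d)) =>
      Set.indicator (ω q.1) (u q.1) q.2)
    (μ0 : Measure (EuclideanSpace ℝ (Fin d) × EuclideanSpace ℝ (Fin d)))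
    [IsProbabilityMeasure μ0] (hcs : IsCompact (msupp μ0))
    (Φ : ℝ → (EuclideanSpace ℝ (Fin d) × EuclideanSpace ℝ (Fin d)) →
      EuclideanSpace ℝ (Fin d) × EuclideanSpace ℝ (Fin d))
    (hΦcont : Continuous fun q : ℝ × (EuclideanSpace ℝ (Fin d) × EuclideanSpace ℝ (Fin d)) =>
      Φ q.1 q.2)
    (hΦ0 : Φ 0 = id)
    (hode : ∀ z ∈ msupp μ0, ∀ t : ℝ, 0 ≤ t →
      HasDerivWithinAt (fun s => Φ s z)
        ((Φ t z).2,
          xi φ (Measure.map (Φ t) μ0) (Φ t z).1 (Φ t z).2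
            + Set.indicator (ω t) (u t) (Φ t z)) (Set.Ici 0) t)
    (xbar vbar : ℝ → EuclideanSpace ℝ (Fin d))
    (hxbar : ∀ t, xbar t = ∫ p, p.1 ∂(Measure.map (Φ t) μ0))
    (hvbar : ∀ t, vbar t = ∫ p, p.2 ∂(Measure.map (Φ t) μ0)) :
    ∀ t : ℝ, 0 ≤ t →
      HasDerivWithinAt xbar (vbar t) (Set.Ici 0) t
      ∧ HasDerivWithinAt vbar (∫ p in ω t, u t p ∂(Measure.map (Φ t) μ0))
          (Set.Ici 0) t :=
  stmt10_general φ hφc u ω hωm hχuc μ0 hcs Φ hΦcont hode xbar vbar hxbar hvbar
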